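/- arXiv:1204.5383 — 6 statements merged into one kernel-verified Lean document; each statement's English description precedes it below -/
import Mathlib

section
/- If an energy ω on partial partitions is h-increasing, then for a node S of a hierarchy H with sons T_1,...,T_p having minimum cuts π_1*,...,π_p*, a cut of S of minimum energy exists among the two candidates: the concatenation π_1* ⊔ π_2* ⊔ ... ⊔ π_p*, and the one-class partition {S}. -/
open Set

/-- A partial partition of `E`: a collection of nonempty pairwise disjoint classes. -/
def IsPP {E : Type*} (π : Set (Set E)) : Prop :=
  (∀ S ∈ π, S.Nonempty) ∧ π.PairwiseDisjoint id

/-- A (finite) hierarchy of partitions of `E`, described by the family of its classes: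
any two classes are nested or disjoint, and the whole space is a class. -/
structure Hierarchy (E : Type*) where
  nodes : Set (Set E)
  finite : nodes.Finite
  nonempty_mem : ∀ S ∈ nodes, S.Nonempty
  nested : ∀ S ∈ nodes, ∀ T ∈ nodes, S ⊆ T ∨ T ⊆ S ∨ S ∩ T = ∅
  top_mem : Set.univ ∈ nodes

/-- A cut of the sub-hierarchy `H(S)`: a partial partition of support `S`
whose classes are classes of the hierarchy. -/
def Cut {E : Type*} (H : Hierarchy E) (S : Set E) (π : Set (Set E)) : Prop :=
  π ⊆ H.nodes ∧ IsPP π ∧ ⋃₀ π = S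

/-- `h`-increasingness of an energy on partial partitions. -/
def HIncreasing {E : Type*} (ω : Set (Set E) → NNReal) : Prop :=
  ∀ π₀ π₁ π₂ : Set (Set E), IsPP π₀ → IsPP π₁ → IsPP π₂ →
    ⋃₀ π₁ = ⋃₀ π₂ → Disjoint (⋃₀ π₁) (⋃₀ π₀) →
    ω π₁ ≤ ω π₂ → ω (π₁ ∪ π₀) ≤ ω (π₂ ∪ π₀)

/-! If `S` is itself a class of the cut `π`, then `π = {S}`. Otherwise every class of `π` is a
proper sub-node of `S`, hence lies in a son `T i`, so `π` is the concatenation of its restrictions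
to the sons, which are cuts of the sons. Replacing these restrictions one at a time by the minimum
cuts `πs i` never increases the energy, by `h`-increasingness applied with the rest of the
concatenation as the context `π₀`. -/

section Partitions

open Function

variable {E : Type*}

theorem IsPP.mono {π π' : Set (Set E)} (h : IsPP π) (h' : π' ⊆ π) : IsPP π' :=
  ⟨fun A hA => h.1 A (h' hA), h.2.subset h'⟩

theorem isPP_empty : IsPP (∅ : Set (Set E)) :=
  ⟨fun _ h => h.elim, pairwiseDisjoint_empty⟩

theorem IsPP.union {π₁ π₂ : Set (Set E)} (h₁ : IsPP π₁) (h₂ : IsPP π₂)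
    (h : Disjoint (⋃₀ π₁) (⋃₀ π₂)) : IsPP (π₁ ∪ π₂) := by
  refine ⟨fun A hA => hA.elim (h₁.1 A) (h₂.1 A), pairwiseDisjoint_union.2 ⟨h₁.2, h₂.2, ?_⟩⟩
  intro A hA B hB _
  exact h.mono (subset_sUnion_of_mem hA) (subset_sUnion_of_mem hB)

theorem isPP_biUnion {ι : Type*} {s : Set ι} {σ : ι → Set (Set E)}
    (hσ : ∀ i ∈ s, IsPP (σ i)) (hs : s.PairwiseDisjoint fun i => ⋃₀ σ i) :
    IsPP (⋃ i ∈ s, σ i) := by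
  refine ⟨fun A hA => ?_, fun A hA B hB hAB => ?_⟩
  · obtain ⟨i, hi, hA⟩ := mem_iUnion₂.1 hA
    exact (hσ i hi).1 A hA
  obtain ⟨i, hi, hA⟩ := mem_iUnion₂.1 hA
  obtain ⟨j, hj, hB⟩ := mem_iUnion₂.1 hB
  obtain rfl | hij := eq_or_ne i j
  · exact (hσ i hi).2 hA hB hAB
  · exact (hs hi hj hij).mono (subset_sUnion_of_mem hA) (subset_sUnion_of_mem hB)

theorem IsPP.eq_singleton_of_mem {π : Set (Set E)} {S : Set E} (h : IsPP π)
    (hU : ⋃₀ π = S) (hS : S ∈ π) : π = {S} := by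
  refine eq_singleton_iff_unique_mem.2 ⟨hS, fun A hA => ?_⟩
  by_contra hne
  obtain ⟨x, hx⟩ := h.1 A hA
  exact disjoint_left.1 (h.2 hA hS hne) hx (hU ▸ mem_sUnion_of_mem hx hA)

section Restrict

variable {ι : Type*} {π : Set (Set E)} {T : ι → Set E}

theorem sUnion_sep_subset_eq (hT : Pairwise (Disjoint on T)) (hcov : ⋃₀ π = ⋃ i, T i)
    (hfine : ∀ A ∈ π, ∃ i, A ⊆ T i) (i : ι) : ⋃₀ {A ∈ π | A ⊆ T i} = T i := by
  refine (sUnion_subset fun A hA => hA.2).antisymm fun x hx => ?_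
  obtain ⟨A, hA, hxA⟩ : x ∈ ⋃₀ π := hcov ▸ mem_iUnion_of_mem i hx
  obtain ⟨j, hAj⟩ := hfine A hA
  obtain rfl : j = i := hT.eq (not_disjoint_iff.2 ⟨x, hAj hxA, hx⟩)
  exact ⟨A, ⟨hA, hAj⟩, hxA⟩

theorem iUnion_sep_subset_eq (hfine : ∀ A ∈ π, ∃ i, A ⊆ T i) :
    ⋃ i, {A ∈ π | A ⊆ T i} = π := by
  refine (iUnion_subset fun _ _ hA => hA.1).antisymm fun A hA => ?_
  obtain ⟨i, hi⟩ := hfine A hA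
  exact mem_iUnion.2 ⟨i, hA, hi⟩

theorem Cut.sep_subset {H : Hierarchy E} {S : Set E} (hπ : Cut H S π)
    (hT : Pairwise (Disjoint on T)) (hcov : S = ⋃ i, T i) (hfine : ∀ A ∈ π, ∃ i, A ⊆ T i)
    (i : ι) : Cut H (T i) {A ∈ π | A ⊆ T i} :=
  ⟨fun _ hA => hπ.1 hA.1, hπ.2.1.mono fun _ hA => hA.1,
    sUnion_sep_subset_eq hT (hπ.2.2.trans hcov) hfine i⟩

end Restrict

section Replace

variable {ι : Type*} {ω : Set (Set E) → NNReal} {T : ι → Set E} {σ τ : ι → Set (Set E)}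

theorem HIncreasing.biUnion_union_le (hω : HIncreasing ω) (hT : Pairwise (Disjoint on T))
    (hσ : ∀ i, IsPP (σ i)) (hτ : ∀ i, IsPP (τ i))
    (hσT : ∀ i, ⋃₀ σ i = T i) (hτT : ∀ i, ⋃₀ τ i = T i) (hle : ∀ i, ω (σ i) ≤ ω (τ i))
    (s : Finset ι) {π₀ : Set (Set E)} (hπ₀ : IsPP π₀) (hs : ∀ i ∈ s, Disjoint (T i) (⋃₀ π₀)) :
    ω ((⋃ i ∈ s, σ i) ∪ π₀) ≤ ω ((⋃ i ∈ s, τ i) ∪ π₀) := by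
  classical
  induction s using Finset.induction_on generalizing π₀ with
  | empty => simp
  | @insert j s hj ih =>
    simp only [Finset.set_biUnion_insert, union_assoc]
    have hsupp : ⋃₀ (⋃ i ∈ s, σ i) = ⋃ i ∈ s, T i := by simp only [sUnion_iUnion, hσT]
    have hsj : ∀ i ∈ s, Disjoint (T j) (T i) := fun i hi => hT (ne_of_mem_of_not_mem hi hj).symm
    have hrest : IsPP ((⋃ i ∈ s, σ i) ∪ π₀) :=
      (isPP_biUnion (fun i _ => hσ i) fun i _ j _ hij => by
        simpa only [onFun, hσT] using hT hij).union hπ₀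
        (hsupp ▸ disjoint_iUnion₂_left.2 fun i hi => hs i (by simp [hi]))
    calc ω (σ j ∪ ((⋃ i ∈ s, σ i) ∪ π₀)) ≤ ω (τ j ∪ ((⋃ i ∈ s, σ i) ∪ π₀)) := by
          refine hω _ _ _ hrest (hσ j) (hτ j) ((hσT j).trans (hτT j).symm) ?_ (hle j)
          rw [sUnion_union, hsupp, hσT]
          exact disjoint_union_right.2 ⟨disjoint_iUnion₂_right.2 hsj, hs j (by simp)⟩
      _ = ω ((⋃ i ∈ s, σ i) ∪ (τ j ∪ π₀)) := by rw [union_left_comm]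
      _ ≤ ω ((⋃ i ∈ s, τ i) ∪ (τ j ∪ π₀)) := by
          refine ih ((hτ j).union hπ₀ (hτT j ▸ hs j (by simp))) fun i hi => ?_
          rw [sUnion_union, hτT]
          exact disjoint_union_right.2 ⟨(hsj i hi).symm, hs i (by simp [hi])⟩
      _ = ω (τ j ∪ ((⋃ i ∈ s, τ i) ∪ π₀)) := by rw [union_left_comm]

theorem HIncreasing.iUnion_le_iUnion [Finite ι] (hω : HIncreasing ω)
    (hT : Pairwise (Disjoint on T)) (hσ : ∀ i, IsPP (σ i)) (hτ : ∀ i, IsPP (τ i))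
    (hσT : ∀ i, ⋃₀ σ i = T i) (hτT : ∀ i, ⋃₀ τ i = T i) (hle : ∀ i, ω (σ i) ≤ ω (τ i)) :
    ω (⋃ i, σ i) ≤ ω (⋃ i, τ i) := by
  cases nonempty_fintype ι
  simpa using hω.biUnion_union_le hT hσ hτ hσT hτT hle Finset.univ isPP_empty (by simp)

end Replace

end Partitions

theorem stmt3_general {E : Type*} (H : Hierarchy E) (ω : Set (Set E) → NNReal)
    (hω : HIncreasing ω)
    (S : Set E)
    (p : ℕ) (T : Fin p → Set E)
    (hTdisj : ∀ i j, i ≠ j → Disjoint (T i) (T j))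
    (hTcover : ⋃ i, T i = S)
    (hTmax : ∀ T' ∈ H.nodes, T' ⊂ S → ∃ i, T' ⊆ T i)
    (πs : Fin p → Set (Set E))
    (hπs : ∀ i, Cut H (T i) (πs i) ∧ ∀ π, Cut H (T i) π → ω (πs i) ≤ ω π) :
    ∀ π, Cut H S π → ω (⋃ i, πs i) ≤ ω π ∨ ω {S} ≤ ω π := by
  intro π hπ
  by_cases hSπ : S ∈ π
  · exact Or.inr (hπ.2.1.eq_singleton_of_mem hπ.2.2 hSπ ▸ le_rfl)
  have hfine : ∀ A ∈ π, ∃ i, A ⊆ T i := fun A hA =>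
    hTmax A (hπ.1 hA)
      ((hπ.2.2 ▸ subset_sUnion_of_mem hA).ssubset_of_ne (ne_of_mem_of_not_mem hA hSπ))
  have hT : Pairwise fun i j => Disjoint (T i) (T j) := fun i j => hTdisj i j
  have hcut := hπ.sep_subset hT hTcover.symm hfine
  refine Or.inl ?_
  calc ω (⋃ i, πs i) ≤ ω (⋃ i, {A ∈ π | A ⊆ T i}) :=
        hω.iUnion_le_iUnion hT (fun i => (hπs i).1.2.1) (fun i => (hcut i).2.1)
          (fun i => (hπs i).1.2.2) (fun i => (hcut i).2.2) fun i => (hπs i).2 _ (hcut i)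
    _ = ω π := by rw [iUnion_sep_subset_eq hfine]

/-- if `ω` is `h`-increasing, then for a node `S` of a hierarchy `H`
with sons `T 1, ..., T p` having minimum cuts `πs 1, ..., πs p`, a cut of `S` of
minimum energy exists among the two candidates `πs 1 ⊔ ... ⊔ πs p` and `{S}`. -/
theorem stmt3 {E : Type*} (H : Hierarchy E) (ω : Set (Set E) → NNReal)
    (hω : HIncreasing ω)
    (S : Set E) (hS : S ∈ H.nodes)
    (p : ℕ) (T : Fin p → Set E)
    (hTmem : ∀ i, T i ∈ H.nodes)
    (hTdisj : ∀ i j, i ≠ j → Disjoint (T i) (T j))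
    (hTcover : ⋃ i, T i = S)
    (hTmax : ∀ T' ∈ H.nodes, T' ⊂ S → ∃ i, T' ⊆ T i)
    (πs : Fin p → Set (Set E))
    (hπs : ∀ i, Cut H (T i) (πs i) ∧ ∀ π, Cut H (T i) π → ω (πs i) ≤ ω π) :
    ∀ π, Cut H S π → ω (⋃ i, πs i) ≤ ω π ∨ ω {S} ≤ ω π :=
  stmt3_general H ω hω S p T hTdisj hTcover hTmax πs hπs
end

section
/- Let ω be an h-increasing energy on the cuts of a finite hierarchy H, let m > 0 be the minimum of all positive differences ω(π') − ω(π) over pairs of cuts with ω(π) < ω(π'), and let 0 < ε < m. Define ω'(π(S)) = ε if π(S) ≠ {S} and ω'(S) = 0. Then ω + ω' is h-increasing. -/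
open Set

/-! Since `ε < m`, adding `ω'` (which takes values in `[0, ε]`) can only break ties of `ω`,
so `ω π₁ + ω' π₁ ≤ ω π₂ + ω' π₂` forces `ω π₁ ≤ ω π₂`, and `h`-increasingness of `ω` applies.
Each `πᵢ ∪ π₀` covers two disjoint nonempty classes, so it has at least two classes and
`ω'` equals `ε` on both sides. -/

theorem le_of_add_le_add_of_gap {α : Type*} [AddCommMonoid α] [LinearOrder α]
    [IsOrderedCancelAddMonoid α] [CanonicallyOrderedAdd α] {a b a' b' ε m : α}
    (hgap : b < a → b + m ≤ a) (hb' : b' ≤ ε) (hεm : ε < m) (h : a + a' ≤ b + b') :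
    a ≤ b := by
  by_contra! hba
  have hlt : a < a := calc
    a ≤ a + a' := le_self_add
    _ ≤ b + b' := h
    _ ≤ b + ε := add_le_add_right hb' b
    _ < b + m := add_lt_add_right hεm b
    _ ≤ a := hgap hba
  exact lt_irrefl a hlt

theorem union_ne_singleton_of_disjoint {E : Type*} {π π₀ : Set (Set E)}
    (hπ : (⋃₀ π).Nonempty) (hπ₀ : (⋃₀ π₀).Nonempty) (h : Disjoint (⋃₀ π) (⋃₀ π₀))
    (A : Set E) : π ∪ π₀ ≠ {A} := by
  intro hA
  have eq_of_sub {σ : Set (Set E)} (hσ : (⋃₀ σ).Nonempty) (hsub : σ ⊆ {A}) : ⋃₀ σ = A := by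
    rcases subset_singleton_iff_eq.mp hsub with rfl | rfl
    · simp at hσ
    · exact sUnion_singleton A
  have h₁ := eq_of_sub hπ (hA ▸ subset_union_left)
  have h₂ := eq_of_sub hπ₀ (hA ▸ subset_union_right)
  rw [h₁, h₂, disjoint_self] at h
  exact hπ.ne_empty (h₁.trans h)

theorem stmt4_general {E : Type*} (H : Hierarchy E) (ω : Set (Set E) → NNReal)
    (hω : HIncreasing ω) (m ε : NNReal)
    (hm : ∀ π π' : Set (Set E), (∃ S ∈ H.nodes, Cut H S π) →
      (∃ S ∈ H.nodes, Cut H S π') → ω π < ω π' → ω π + m ≤ ω π')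
    (hεm : ε < m)
    (ω' : Set (Set E) → NNReal)
    (hω' : ∀ π : Set (Set E), (¬ ∃ A : Set E, π = {A}) → ω' π = ε)
    (hω'0 : ∀ A : Set E, ω' {A} = 0) :
    ∀ S S₀ : Set E, S ∈ H.nodes → S₀ ∈ H.nodes → Disjoint S S₀ →
      ∀ π₀ π₁ π₂ : Set (Set E), Cut H S π₁ → Cut H S π₂ → Cut H S₀ π₀ →
        ω π₁ + ω' π₁ ≤ ω π₂ + ω' π₂ →
        ω (π₁ ∪ π₀) + ω' (π₁ ∪ π₀) ≤ ω (π₂ ∪ π₀) + ω' (π₂ ∪ π₀) := by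
  intro S S₀ hS hS₀ hdisj π₀ π₁ π₂ h₁ h₂ h₀ hle
  have hω'ε (π : Set (Set E)) : ω' π ≤ ε := by
    by_cases h : ∃ A : Set E, π = {A}
    · obtain ⟨A, rfl⟩ := h
      simp [hω'0]
    · exact (hω' π h).le
  have hωle : ω π₁ ≤ ω π₂ :=
    le_of_add_le_add_of_gap (hm π₂ π₁ ⟨S, hS, h₂⟩ ⟨S, hS, h₁⟩) (hω'ε π₂) hεm hle
  have hunion : ω (π₁ ∪ π₀) ≤ ω (π₂ ∪ π₀) :=
    hω π₀ π₁ π₂ h₀.2.1 h₁.2.1 h₂.2.1 (h₁.2.2.trans h₂.2.2.symm)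
      (by rw [h₁.2.2, h₀.2.2]; exact hdisj) hωle
  have hω'union {π : Set (Set E)} (hπ : Cut H S π) : ω' (π ∪ π₀) = ε := by
    refine hω' _ (not_exists.mpr (union_ne_singleton_of_disjoint ?_ ?_ ?_))
    · exact hπ.2.2 ▸ H.nonempty_mem S hS
    · exact h₀.2.2 ▸ H.nonempty_mem S₀ hS₀
    · rw [hπ.2.2, h₀.2.2]; exact hdisj
  rw [hω'union h₁, hω'union h₂]
  exact add_le_add_left hunion ε

/-- with `ω` `h`-increasing on the cuts of a finite hierarchy, `m > 0`
the minimum positive gap between energies of cuts, and `0 < ε < m`, the perturbation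
`ω'` (equal to `ε` on cuts different from the one-class partition and `0` on one-class
partitions) makes `ω + ω'` `h`-increasing. -/
theorem stmt4 {E : Type*} (H : Hierarchy E) (ω : Set (Set E) → NNReal)
    (hω : HIncreasing ω) (m ε : NNReal)
    (hm : ∀ π π' : Set (Set E), (∃ S ∈ H.nodes, Cut H S π) →
      (∃ S ∈ H.nodes, Cut H S π') → ω π < ω π' → ω π + m ≤ ω π')
    (hε0 : 0 < ε) (hεm : ε < m)
    (ω' : Set (Set E) → NNReal)
    (hω' : ∀ π : Set (Set E), (¬ ∃ A : Set E, π = {A}) → ω' π = ε)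
    (hω'0 : ∀ A : Set E, ω' {A} = 0) :
    ∀ S S₀ : Set E, S ∈ H.nodes → S₀ ∈ H.nodes → Disjoint S S₀ →
      ∀ π₀ π₁ π₂ : Set (Set E), Cut H S π₁ → Cut H S π₂ → Cut H S₀ π₀ →
        ω π₁ + ω' π₁ ≤ ω π₂ + ω' π₂ →
        ω (π₁ ∪ π₀) + ω' (π₁ ∪ π₀) ≤ ω (π₂ ∪ π₀) + ω' (π₂ ∪ π₀) :=
  stmt4_general H ω hω m ε hm hεm ω' hω' hω'0
end

section
/- Let {ω_i : i ∈ I} be a finite family of energies on partial partitions satisfying the cross condition: for all i, j ∈ I and all partial partitions π_1, π_2 of the same support and π_0 of disjoint support, ω_i(π_1) ≤ ω_j(π_2) implies ω_i(π_1 ⊔ π_0) ≤ ω_j(π_2 ⊔ π_0). Then the pointwise infimum ∧_i ω_i is h-increasing: (∧ω_i)(π) ≤ (∧ω_i)(π') implies (∧ω_i)(π ⊔ π_0) ≤ (∧ω_i)(π' ⊔ π_0). -/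
open Set

/-! The infimum of the finite family at `π₁` is attained by some `ω i`; the cross condition, applied
to `ω i` against each `ω j`, carries `ω i π₁ ≤ ω j π₂` over to the concatenations with `π₀`. -/

theorem ciInf_le_ciInf_of_forall_le_imp_le {α I : Type*} [ConditionallyCompleteLinearOrder α]
    [Finite I] {f g f' g' : I → α} (hcross : ∀ i j, f i ≤ g j → f' i ≤ g' j)
    (hle : ⨅ i, f i ≤ ⨅ i, g i) : ⨅ i, f' i ≤ ⨅ i, g' i := by
  cases isEmpty_or_nonempty I
  · simp only [iInf, Set.range_eq_empty, le_rfl]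
  obtain ⟨i, hi⟩ := exists_eq_ciInf_of_finite (f := f)
  refine le_ciInf fun j => (ciInf_le (Finite.bddBelow_range f') i).trans (hcross i j ?_)
  calc f i = ⨅ k, f k := hi
    _ ≤ ⨅ k, g k := hle
    _ ≤ g j := ciInf_le (Finite.bddBelow_range g) j

theorem stmt9_general {E : Type*} {I : Type*} [Fintype I]
    (ω : I → Set (Set E) → NNReal)
    (hcross : ∀ i j : I, ∀ π₀ π₁ π₂ : Set (Set E), IsPP π₀ → IsPP π₁ → IsPP π₂ →
      ⋃₀ π₁ = ⋃₀ π₂ → Disjoint (⋃₀ π₁) (⋃₀ π₀) →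
      ω i π₁ ≤ ω j π₂ → ω i (π₁ ∪ π₀) ≤ ω j (π₂ ∪ π₀)) :
    HIncreasing (fun π => ⨅ i, ω i π) := by
  intro π₀ π₁ π₂ h₀ h₁ h₂ hsupp hdisj hle
  exact ciInf_le_ciInf_of_forall_le_imp_le
    (fun i j => hcross i j π₀ π₁ π₂ h₀ h₁ h₂ hsupp hdisj) hle

/-- if a finite family `{ω i}` of energies satisfies the cross condition
`ω i π₁ ≤ ω j π₂ → ω i (π₁ ⊔ π₀) ≤ ω j (π₂ ⊔ π₀)` (for `π₁, π₂` of the same support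
and `π₀` of disjoint support), then the pointwise infimum `⨅ i, ω i` is `h`-increasing. -/
theorem stmt9 {E : Type*} {I : Type*} [Fintype I] [Nonempty I]
    (ω : I → Set (Set E) → NNReal)
    (hcross : ∀ i j : I, ∀ π₀ π₁ π₂ : Set (Set E), IsPP π₀ → IsPP π₁ → IsPP π₂ →
      ⋃₀ π₁ = ⋃₀ π₂ → Disjoint (⋃₀ π₁) (⋃₀ π₀) →
      ω i π₁ ≤ ω j π₂ → ω i (π₁ ∪ π₀) ≤ ω j (π₂ ∪ π₀)) :
    HIncreasing (fun π => ⨅ i, ω i π) :=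
  stmt9_general ω hcross
end

section
/- Under the same cross condition, the pointwise supremum ∨_i ω_i of a finite family {ω_i} is h-increasing. -/
open Set

/-- The supremum of `g` is attained at some `j`, and every `f i` lies below it; the cross
condition then puts each `f' i` below `g' j`. -/
theorem ciSup_le_ciSup_of_forall_le_imp_le {α ι : Type*} [ConditionallyCompleteLinearOrder α]
    [Finite ι] {f g f' g' : ι → α} (hcross : ∀ i j, f i ≤ g j → f' i ≤ g' j)
    (hle : ⨆ i, f i ≤ ⨆ i, g i) : ⨆ i, f' i ≤ ⨆ i, g' i := by
  cases isEmpty_or_nonempty ι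
  · simp only [iSup, range_eq_empty, le_refl]
  obtain ⟨j, hj⟩ := exists_eq_ciSup_of_finite (f := g)
  refine ciSup_le fun i => (hcross i j ?_).trans (le_ciSup (Finite.bddAbove_range g') j)
  calc f i ≤ ⨆ i, f i := le_ciSup (Finite.bddAbove_range f) i
    _ ≤ g j := hle.trans hj.ge

theorem stmt10_general {E : Type*} {I : Type*} [Fintype I]
    (ω : I → Set (Set E) → NNReal)
    (hcross : ∀ i j : I, ∀ π₀ π₁ π₂ : Set (Set E), IsPP π₀ → IsPP π₁ → IsPP π₂ →
      ⋃₀ π₁ = ⋃₀ π₂ → Disjoint (⋃₀ π₁) (⋃₀ π₀) →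
      ω i π₁ ≤ ω j π₂ → ω i (π₁ ∪ π₀) ≤ ω j (π₂ ∪ π₀)) :
    HIncreasing (fun π => ⨆ i, ω i π) :=
  fun π₀ π₁ π₂ h₀ h₁ h₂ hsupp hdisj hle =>
    ciSup_le_ciSup_of_forall_le_imp_le
      (fun i j => hcross i j π₀ π₁ π₂ h₀ h₁ h₂ hsupp hdisj) hle

/-- under the same cross condition, the pointwise supremum
`⨆ i, ω i` of a finite family is `h`-increasing. -/
theorem stmt10 {E : Type*} {I : Type*} [Fintype I] [Nonempty I]
    (ω : I → Set (Set E) → NNReal)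
    (hcross : ∀ i j : I, ∀ π₀ π₁ π₂ : Set (Set E), IsPP π₀ → IsPP π₁ → IsPP π₂ →
      ⋃₀ π₁ = ⋃₀ π₂ → Disjoint (⋃₀ π₁) (⋃₀ π₀) →
      ω i π₁ ≤ ω j π₂ → ω i (π₁ ∪ π₀) ≤ ω j (π₂ ∪ π₀)) :
    HIncreasing (fun π => ⨆ i, ω i π) :=
  stmt10_general ω hcross
end

section
/- The ∨-composed extension of any set energy is h-increasing: if ω : P(E) → ℝ≥0 and one defines ω(π) = sup{ω(S) : S class of π} for partial partitions π, then this extension satisfies ω(π_1) ≤ ω(π_2) ⟹ ω(π_1 ⊔ π_0) ≤ ω(π_2 ⊔ π_0). -/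
open Set

/-- A (finite-class) partial partition of `E`, given as a finite collection of
nonempty pairwise disjoint classes. -/
def IsPPF {E : Type*} (π : Finset (Set E)) : Prop :=
  (∀ S ∈ π, S.Nonempty) ∧ (π : Set (Set E)).PairwiseDisjoint id

/-- Support of a finite partial partition. -/
def suppF {E : Type*} (π : Finset (Set E)) : Set E := ⋃₀ (π : Set (Set E))

open scoped Classical in
/-- the `∨`-composed extension `π ↦ sup {ωs S : S class of π}` of any
set energy `ωs : P(E) → ℝ≥0` is `h`-increasing. -/
theorem stmt12 {E : Type*} (ωs : Set E → NNReal) :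
    ∀ π₀ π₁ π₂ : Finset (Set E), IsPPF π₀ → IsPPF π₁ → IsPPF π₂ →
      suppF π₁ = suppF π₂ → Disjoint (suppF π₁) (suppF π₀) →
      π₁.sup ωs ≤ π₂.sup ωs →
      (π₁ ∪ π₀).sup ωs ≤ (π₂ ∪ π₀).sup ωs := by
  intro π₀ π₁ π₂ _ _ _ _ _ h
  rw [Finset.sup_union, Finset.sup_union]
  exact sup_le_sup_right h _
end

section
/- The ∧-composed (infimum) extension of any set energy to partial partitions, ω(π) = inf{ω(S) : S class of π}, is h-increasing. -/
/-!
The classes of `π₁ ∪ π₀` are those of `π₁` together with those of `π₀`, so its infimum is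
`min (inf π₁) (inf π₀)`, which is monotone in `inf π₁`. This needs `π₁` and `π₂` nonempty,
since `sInf ∅ = 0` in `ℝ≥0`; as all classes are nonempty and the supports agree, `π₁` and `π₂`
are either both empty (a trivial case) or both nonempty.
-/

open Set

theorem csInf_union_le_csInf_union {α : Type*} [ConditionallyCompleteLinearOrderBot α]
    {s t u : Set α} (hs : s.Nonempty) (ht : t.Nonempty) (h : sInf s ≤ sInf t) :
    sInf (s ∪ u) ≤ sInf (t ∪ u) := by
  refine le_csInf (ht.mono subset_union_left) ?_
  rintro b (hb | hb)
  · calc sInf (s ∪ u) ≤ sInf s := csInf_le_csInf (OrderBot.bddBelow _) hs subset_union_left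
      _ ≤ sInf t := h
      _ ≤ b := csInf_le (OrderBot.bddBelow _) hb
  · exact csInf_le (OrderBot.bddBelow _) (Or.inr hb)

theorem IsPPF.suppF_nonempty_iff {E : Type*} {π : Finset (Set E)} (h : IsPPF π) :
    (suppF π).Nonempty ↔ π.Nonempty := by
  constructor
  · rintro ⟨x, S, hS, -⟩
    exact ⟨S, hS⟩
  · rintro ⟨S, hS⟩
    obtain ⟨x, hx⟩ := h.1 S hS
    exact ⟨x, S, hS, hx⟩

open scoped Classical in
/-- the `∧`-composed (infimum) extension
`π ↦ inf {ωs S : S class of π}` of any set energy is `h`-increasing. -/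
theorem stmt13 {E : Type*} (ωs : Set E → NNReal) :
    ∀ π₀ π₁ π₂ : Finset (Set E), IsPPF π₀ → IsPPF π₁ → IsPPF π₂ →
      suppF π₁ = suppF π₂ → Disjoint (suppF π₁) (suppF π₀) →
      sInf (ωs '' (π₁ : Set (Set E))) ≤ sInf (ωs '' (π₂ : Set (Set E))) →
      sInf (ωs '' ((π₁ ∪ π₀ : Finset (Set E)) : Set (Set E))) ≤
        sInf (ωs '' ((π₂ ∪ π₀ : Finset (Set E)) : Set (Set E))) := by
  intro π₀ π₁ π₂ _ h₁ h₂ hsupp _ hle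
  have hne : π₁.Nonempty ↔ π₂.Nonempty := by
    rw [← h₁.suppF_nonempty_iff, hsupp, h₂.suppF_nonempty_iff]
  rcases π₂.eq_empty_or_nonempty with rfl | hne₂
  · obtain rfl : π₁ = ∅ := Finset.not_nonempty_iff_eq_empty.1 (by simpa using hne)
    rfl
  · simp only [Finset.coe_union, image_union]
    exact csInf_union_le_csInf_union ((Finset.coe_nonempty.2 (hne.2 hne₂)).image ωs)
      ((Finset.coe_nonempty.2 hne₂).image ωs) hle
end
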